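/- Let X be a q-skeletal symmetric simplicial set. Then X is spiny if and only if 𝓔_T is injective for every spine T of [n] for each 1 ≤ n ≤ q. -/

import Mathlib

/-- A symmetric (simplicial) set: a functor `Υᵒᵖ → Set`, where `Υ` has objects
`[n] = {0,…,n}` (encoded as `Fin (n+1)`) and all functions as morphisms.
For `α : [m] → [n]` and `x ∈ X_n`, `act α x` is `x · α ∈ X_m`. -/
structure SymSet where
  obj : ℕ → Type
  act : ∀ {m n : ℕ}, (Fin (m + 1) → Fin (n + 1)) → obj n → obj m
  act_id : ∀ {n : ℕ} (x : obj n), act id x = x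
  act_comp : ∀ {m n k : ℕ} (α : Fin (m + 1) → Fin (n + 1)) (β : Fin (n + 1) → Fin (k + 1))
      (x : obj k), act α (act β x) = act (β ∘ α) x

namespace SymSet

/-- `x_{ij} ∈ X_1`, the action on `x ∈ X_n` of the map `[1] → [n]` with `0 ↦ i`, `1 ↦ j`. -/
def edge (X : SymSet) {n : ℕ} (i j : Fin (n + 1)) (x : X.obj n) : X.obj 1 :=
  X.act (fun t : Fin 2 => if t = 0 then i else j) x

/-- The domain of an edge, its image under `ι₀ : [0] → [1]`, `0 ↦ 0`. -/
def edgeDom (X : SymSet) (f : X.obj 1) : X.obj 0 :=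
  X.act (fun _ : Fin 1 => (0 : Fin 2)) f

/-- The codomain of an edge, its image under `ι₁ : [0] → [1]`, `0 ↦ 1`. -/
def edgeCod (X : SymSet) (f : X.obj 1) : X.obj 0 :=
  X.act (fun _ : Fin 1 => (1 : Fin 2)) f

/-- The identity edge `id_a` on an object `a ∈ X_0`, induced by the unique map `[1] → [0]`. -/
def identityEdge (X : SymSet) (a : X.obj 0) : X.obj 1 :=
  X.act (fun _ : Fin 2 => (0 : Fin 1)) a

/-- An edge is an identity if it is in the image of `X_0 → X_1`. -/
def IsIdentityEdge (X : SymSet) (f : X.obj 1) : Prop :=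
  ∃ a : X.obj 0, f = X.identityEdge a

/-- The tuple of edges `x_{ij}` (for `i < j` an edge `{i,j}` of the spine `T`)
associated to an `n`-simplex `x`. -/
def spineTuple (X : SymSet) {n : ℕ} (T : SimpleGraph (Fin (n + 1))) (x : X.obj n) :
    ∀ i j : Fin (n + 1), i < j → T.Adj i j → X.obj 1 :=
  fun i j _ _ => X.edge i j x

/-- Membership in `lim_T X`: the components have matching endpoints. -/
def IsSpineLim (X : SymSet) {n : ℕ} (T : SimpleGraph (Fin (n + 1)))
    (e : ∀ i j : Fin (n + 1), i < j → T.Adj i j → X.obj 1) : Prop :=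
  ∃ v : Fin (n + 1) → X.obj 0, ∀ (i j : Fin (n + 1)) (hlt : i < j) (h : T.Adj i j),
    X.edgeDom (e i j hlt h) = v i ∧ X.edgeCod (e i j hlt h) = v j

/-- The limit `lim_T X` of the diagram associated to a spine `T`. -/
def SpineLim (X : SymSet) {n : ℕ} (T : SimpleGraph (Fin (n + 1))) : Type :=
  { e : ∀ i j : Fin (n + 1), i < j → T.Adj i j → X.obj 1 // X.IsSpineLim T e }

lemma spineTuple_isSpineLim (X : SymSet) {n : ℕ} (T : SimpleGraph (Fin (n + 1)))
    (x : X.obj n) : X.IsSpineLim T (X.spineTuple T x) := by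
  refine ⟨fun i => X.act (fun _ : Fin 1 => i) x, fun i j hlt h => ⟨?_, ?_⟩⟩
  · show X.act _ (X.act _ x) = _
    rw [X.act_comp]
    show X.act ((fun t : Fin 2 => if t = 0 then i else j) ∘ fun _ : Fin 1 => 0) x
      = X.act (fun _ : Fin 1 => i) x
    congr 1
  · show X.act _ (X.act _ x) = _
    rw [X.act_comp]
    show X.act ((fun t : Fin 2 => if t = 0 then i else j) ∘ fun _ : Fin 1 => 1) x
      = X.act (fun _ : Fin 1 => j) x
    congr 1

/-- The map `𝓔_T : X_n → lim_T X`. -/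
def spineMap (X : SymSet) {n : ℕ} (T : SimpleGraph (Fin (n + 1))) (x : X.obj n) :
    X.SpineLim T :=
  ⟨X.spineTuple T x, X.spineTuple_isSpineLim T x⟩

/-- A symmetric set is *spiny* if `𝓔_T` is injective for every `n ≥ 1` and
every spine `T` of `[n]` (a tree with vertex set `[n]`). -/
def Spiny (X : SymSet) : Prop :=
  ∀ n : ℕ, 1 ≤ n → ∀ T : SimpleGraph (Fin (n + 1)), T.IsTree →
    Function.Injective (X.spineMap T)

/-- An element `x ∈ X_n` is degenerate if `x = y · σ` for some noninvertible
surjection `σ : [n] → [k]`. -/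
def Degenerate (X : SymSet) {n : ℕ} (x : X.obj n) : Prop :=
  ∃ (k : ℕ) (σ : Fin (n + 1) → Fin (k + 1)) (y : X.obj k),
    Function.Surjective σ ∧ ¬ Function.Bijective σ ∧ x = X.act σ y

/-- A symmetric subset (subfunctor) of `X`. -/
structure SymSubset (X : SymSet) where
  carrier : ∀ n : ℕ, Set (X.obj n)
  act_mem : ∀ {m n : ℕ} (α : Fin (m + 1) → Fin (n + 1)) {x : X.obj n},
    x ∈ carrier n → X.act α x ∈ carrier m

/-- `X` is `n`-skeletal: the smallest symmetric subset of `X` containing all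
of its `n`-simplices is all of `X`. -/
def IsSkeletal (X : SymSet) (n : ℕ) : Prop :=
  ∀ Y : SymSubset X, (∀ x : X.obj n, x ∈ Y.carrier n) →
    ∀ (m : ℕ) (x : X.obj m), x ∈ Y.carrier m

/-- `X` has dimension `n`: it is `n`-skeletal but not `k`-skeletal for `k < n`
(for `n ≥ 1` this is equivalent to not being `(n-1)`-skeletal). -/
def HasDim (X : SymSet) (n : ℕ) : Prop :=
  X.IsSkeletal n ∧ ∀ k : ℕ, k < n → ¬ X.IsSkeletal k

/-- Two objects are related if there is an edge between them (in either direction). -/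
def EdgeRel (X : SymSet) (a b : X.obj 0) : Prop :=
  ∃ f : X.obj 1, (X.edgeDom f = a ∧ X.edgeCod f = b) ∨ (X.edgeDom f = b ∧ X.edgeCod f = a)

/-- `X` is connected: it is nonempty and any two objects are joined by a
zig-zag of edges. -/
def Connected (X : SymSet) : Prop :=
  Nonempty (X.obj 0) ∧ ∀ a b : X.obj 0, Relation.ReflTransGen X.EdgeRel a b

/-- `n_a`: the number of nonidentity edges with domain `a`. -/
noncomputable def nEdges (X : SymSet) (a : X.obj 0) : ℕ :=
  Nat.card { f : X.obj 1 // X.edgeDom f = a ∧ ¬ X.IsIdentityEdge f }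

/-- `p(X)`: the maximum of the `n_a` over all objects `a`. -/
noncomputable def pVal (X : SymSet) : ℕ := ⨆ a : X.obj 0, X.nEdges a

/-- A map of symmetric sets (a natural transformation). -/
structure SymMap (X Y : SymSet) where
  app : ∀ n : ℕ, X.obj n → Y.obj n
  naturality : ∀ {m n : ℕ} (α : Fin (m + 1) → Fin (n + 1)) (x : X.obj n),
    app m (X.act α x) = Y.act α (app n x)

/-- A map of symmetric sets is an isomorphism iff it is levelwise bijective. -/
def SymMap.IsIso {X Y : SymSet} (F : SymMap X Y) : Prop :=
  ∀ n : ℕ, Function.Bijective (F.app n)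

/-- `X` and `Y` are isomorphic symmetric sets. -/
def Isomorphic (X Y : SymSet) : Prop := ∃ F : SymMap X Y, F.IsIso

/-- The Bousfield–Segal map `𝓑_m : X_m → X_1^m`, `x ↦ (x_{01}, x_{02}, …, x_{0m})`. -/
def bousfield (X : SymSet) {m : ℕ} (x : X.obj m) : Fin m → X.obj 1 :=
  fun i => X.edge 0 i.succ x

/-- `X` is spiny in degrees below `q`: `𝓔_T` is injective for every spine `T`
of `[n]` for each `1 ≤ n ≤ q`. -/
def SpinyBelow (X : SymSet) (q : ℕ) : Prop :=
  ∀ n : ℕ, 1 ≤ n → n ≤ q → ∀ T : SimpleGraph (Fin (n + 1)), T.IsTree →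
    Function.Injective (X.spineMap T)

/-- `X` is a groupoid: `𝓔_T : X_n → lim_T X` is a bijection for every `n ≥ 1`
and every spine `T` of `[n]`. -/
def IsGroupoid (X : SymSet) : Prop :=
  ∀ n : ℕ, 1 ≤ n → ∀ T : SimpleGraph (Fin (n + 1)), T.IsTree →
    Function.Bijective (X.spineMap T)

/-- `X` is reduced: `X_0` is a singleton. -/
def Reduced (X : SymSet) : Prop := Nonempty (X.obj 0) ∧ Subsingleton (X.obj 0)

/-- A partial group is a reduced spiny symmetric set. -/
def IsPartialGroup (X : SymSet) : Prop := X.Reduced ∧ X.Spiny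

/-- The levelwise product of two symmetric sets. -/
def prod (X Y : SymSet) : SymSet where
  obj n := X.obj n × Y.obj n
  act α p := (X.act α p.1, Y.act α p.2)
  act_id p := by cases p with | mk a b => simp only [X.act_id, Y.act_id]
  act_comp α β p := by cases p with | mk a b => simp only [X.act_comp, Y.act_comp]

end SymSet


/-!
Above the skeletal dimension every simplex `x` is degenerate: it is fixed by the map collapsing
some vertex `b` onto another vertex `a`, hence it is determined by its face `x · δ_b`. Given
injectivity one degree lower, an edge `x_{cd}` of such an `x` is an identity exactly when `x` is
degenerate along `{c, d}`. If `x, x'` agree along a spine, then in degree `≥ 3` all their edges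
agree (compare `2`-dimensional faces along paths of the spine), so `x'` is degenerate along the
same pair as `x`, and the faces `x · δ_b = x' · δ_b` coincide by injectivity one degree lower.
In degree `2` the same works once `b` is chosen away from the centre of the spine.
-/

namespace SimpleGraph

theorem Connected.exists_isUniversal_of_fin_three {G : SimpleGraph (Fin 3)} (hG : G.Connected) :
    ∃ c, G.IsUniversal c := by
  have h (v : Fin 3) : ∃ w, G.Adj v w :=
    G.exists_adj_iff_not_isIsolated.2 (hG.preconnected.not_isIsolated v)
  obtain ⟨z0, h0⟩ := h 0
  obtain ⟨z1, h1⟩ := h 1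
  obtain ⟨z2, h2⟩ := h 2
  clear h
  by_cases h01 : G.Adj 0 1
  · fin_cases z2
    · exact ⟨0, fun w hw => by fin_cases w <;> grind [Adj.symm, SimpleGraph.irrefl]⟩
    · exact ⟨1, fun w hw => by fin_cases w <;> grind [Adj.symm, SimpleGraph.irrefl]⟩
    · exact absurd h2 G.irrefl
  · refine ⟨2, fun w hw => ?_⟩
    fin_cases z0 <;> fin_cases z1 <;> fin_cases w <;> grind [Adj.symm, SimpleGraph.irrefl]

end SimpleGraph

theorem Fin.exists_succAbove_comp_eq_update {n : ℕ} {a b : Fin (n + 2)} (hab : a ≠ b) :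
    ∃ σ : Fin (n + 2) → Fin (n + 1), b.succAbove ∘ σ = Function.update id b a := by
  obtain ⟨a', rfl⟩ := Fin.exists_succAbove_eq hab
  refine ⟨Fin.insertNth b a' id, funext fun k => ?_⟩
  cases k using Fin.succAboveCases b with
  | x => simp
  | p k => simp [Fin.succAbove_ne]

namespace SymSet

variable {X : SymSet}

def SpinyAt (X : SymSet) (n : ℕ) : Prop :=
  ∀ T : SimpleGraph (Fin (n + 1)), T.IsTree → Function.Injective (X.spineMap T)

def IsDegenerateAlong {n : ℕ} (x : X.obj n) (i j : Fin (n + 1)) : Prop :=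
  X.act (Function.update id j i) x = x

theorem edge_act {m n : ℕ} (α : Fin (m + 1) → Fin (n + 1)) (a b : Fin (m + 1)) (x : X.obj n) :
    X.edge a b (X.act α x) = X.edge (α a) (α b) x := by
  unfold edge
  rw [X.act_comp]
  congr 1
  funext t
  by_cases h : t = 0 <;> simp [h]

theorem edge_edge {n : ℕ} (a b : Fin 2) (i j : Fin (n + 1)) (x : X.obj n) :
    X.edge a b (X.edge i j x) = X.edge (if a = 0 then i else j) (if b = 0 then i else j) x :=
  edge_act _ a b x

theorem edge_swap {n : ℕ} (i j : Fin (n + 1)) (x : X.obj n) :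
    X.edge j i x = X.edge 1 0 (X.edge i j x) := by
  simp [edge_edge]

theorem edge_self {n : ℕ} (i j : Fin (n + 1)) (x : X.obj n) :
    X.edge i i x = X.edge 0 0 (X.edge i j x) := by
  simp [edge_edge]

theorem edge_zero_one (f : X.obj 1) : X.edge 0 1 f = f := by
  have hid : (fun t : Fin 2 => if t = 0 then (0 : Fin 2) else 1) = id := by
    funext t
    fin_cases t <;> rfl
  rw [edge, hid, X.act_id]

theorem spineMap_eq_iff {n : ℕ} {T : SimpleGraph (Fin (n + 1))} {x x' : X.obj n} :
    X.spineMap T x = X.spineMap T x' ↔ ∀ a b, T.Adj a b → X.edge a b x = X.edge a b x' := by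
  refine ⟨fun h a b hab => ?_, fun h => Subtype.ext (by funext a b _ hab; exact h a b hab)⟩
  have h' {a b} (hlt : a < b) (hab : T.Adj a b) : X.edge a b x = X.edge a b x' :=
    congrFun (congrFun (congrFun (congrFun (congrArg Subtype.val h) a) b) hlt) hab
  rcases lt_or_gt_of_ne hab.ne with hlt | hgt
  · exact h' hlt hab
  · rw [edge_swap b a, edge_swap b a, h' hgt hab.symm]

theorem spinyAt_one (X : SymSet) : X.SpinyAt 1 := by
  intro T hT f f' h
  obtain ⟨z, hz⟩ := T.exists_adj_iff_not_isIsolated.2 (hT.connected.preconnected.not_isIsolated 0)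
  obtain rfl : z = 1 := by fin_cases z; exacts [absurd hz T.irrefl, rfl]
  simpa only [edge_zero_one] using spineMap_eq_iff.1 h 0 1 hz

theorem isDegenerateAlong_self {n : ℕ} (x : X.obj n) (i : Fin (n + 1)) :
    IsDegenerateAlong x i i := by
  rw [IsDegenerateAlong, show Function.update id i i = id from Function.update_eq_self i id,
    X.act_id]

theorem IsDegenerateAlong.symm {n : ℕ} {x : X.obj n} {i j : Fin (n + 1)}
    (h : IsDegenerateAlong x i j) : IsDegenerateAlong x j i := by
  rw [IsDegenerateAlong, ← h, X.act_comp]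
  congr 1
  funext k
  by_cases hki : k = i <;> by_cases hkj : k = j <;> simp [Function.update_apply, hki, hkj]

theorem isDegenerateAlong_act {m n : ℕ} {σ : Fin (m + 1) → Fin (n + 1)} {y : X.obj n}
    {c d : Fin (m + 1)} (h : IsDegenerateAlong y (σ c) (σ d)) :
    IsDegenerateAlong (X.act σ y) c d := by
  have hσ : Function.update id (σ d) (σ c) ∘ σ ∘ Function.update id d c =
      Function.update id (σ d) (σ c) ∘ σ := by
    funext k
    by_cases hk : k = d <;> simp [Function.update_apply, hk]
  rw [IsDegenerateAlong, X.act_comp, ← h, X.act_comp, X.act_comp, hσ]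

theorem IsDegenerateAlong.edge_eq {n : ℕ} {x : X.obj n} {i j : Fin (n + 1)}
    (h : IsDegenerateAlong x i j) : X.edge i j x = X.edge i i x := by
  conv_lhs => rw [← h]
  rw [edge_act]
  simp [Function.update_apply]

theorem isDegenerateAlong_of_edge_eq {n : ℕ} (hX : X.SpinyAt n) {x : X.obj n}
    {i j : Fin (n + 1)} (h : X.edge i j x = X.edge i i x) : IsDegenerateAlong x i j := by
  have hstar (b : Fin (n + 1)) : X.edge i b (X.act (Function.update id j i) x) = X.edge i b x := by
    rw [edge_act]
    by_cases hb : b = j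
    · subst hb
      simp [Function.update_apply, h]
    · simp [Function.update_apply, hb]
  apply hX _ (SimpleGraph.isTree_starGraph i)
  rw [spineMap_eq_iff]
  rintro a b ⟨-, rfl | rfl⟩
  · exact hstar b
  · rw [edge_swap _ a, edge_swap _ a x, hstar]

theorem IsDegenerateAlong.act_act_succAbove {n : ℕ} {x : X.obj (n + 1)} {a b : Fin (n + 2)}
    (h : IsDegenerateAlong x a b) {σ : Fin (n + 2) → Fin (n + 1)}
    (hσ : b.succAbove ∘ σ = Function.update id b a) : X.act σ (X.act b.succAbove x) = x := by
  rw [X.act_comp, hσ, h]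

theorem IsDegenerateAlong.of_edge_eq_edge_self {n : ℕ} (hX : X.SpinyAt n) {x : X.obj (n + 1)}
    {a b c d : Fin (n + 2)} (hx : IsDegenerateAlong x a b) (hab : a ≠ b)
    (h : X.edge c d x = X.edge c c x) : IsDegenerateAlong x c d := by
  obtain ⟨σ, hσ⟩ := Fin.exists_succAbove_comp_eq_update hab
  have hxy := hx.act_act_succAbove hσ
  generalize X.act b.succAbove x = y at hxy
  subst hxy
  rw [edge_act, edge_act] at h
  exact isDegenerateAlong_act (isDegenerateAlong_of_edge_eq hX h)

theorem IsDegenerateAlong.of_edge_eq {n : ℕ} (hX : X.SpinyAt n) {x x' : X.obj (n + 1)}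
    {a b c d : Fin (n + 2)} (hx' : IsDegenerateAlong x' a b) (hab : a ≠ b)
    (hx : IsDegenerateAlong x c d) (h : X.edge c d x = X.edge c d x') :
    IsDegenerateAlong x' c d := by
  refine hx'.of_edge_eq_edge_self hX hab ?_
  rw [← h, hx.edge_eq, edge_self c d x, edge_self c d x', h]

theorem eq_of_isDegenerateAlong {n : ℕ} (hX : X.SpinyAt n) {x x' : X.obj (n + 1)}
    {a b : Fin (n + 2)} (hab : a ≠ b) (hx : IsDegenerateAlong x a b)
    (hx' : IsDegenerateAlong x' a b)
    (h : ∀ c d, c ≠ d → c ≠ b → d ≠ b → X.edge c d x = X.edge c d x') : x = x' := by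
  obtain ⟨σ, hσ⟩ := Fin.exists_succAbove_comp_eq_update hab
  have hface : X.act b.succAbove x = X.act b.succAbove x' := by
    apply hX _ (SimpleGraph.isTree_starGraph 0)
    rw [spineMap_eq_iff]
    intro p r hpr
    rw [edge_act, edge_act]
    exact h _ _ (Fin.succAbove_right_injective.ne hpr.ne) (Fin.succAbove_ne b p)
      (Fin.succAbove_ne b r)
  rw [← hx.act_act_succAbove hσ, ← hx'.act_act_succAbove hσ, hface]

theorem edge_eq_of_edge_eq_of_edge_eq (hX : X.SpinyAt 2) {n : ℕ} {x x' : X.obj n}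
    {u v w : Fin (n + 1)} (huv : X.edge u v x = X.edge u v x')
    (hvw : X.edge v w x = X.edge v w x') : X.edge u w x = X.edge u w x' := by
  have hface : X.act ![u, v, w] x = X.act ![u, v, w] x' := by
    apply hX _ (SimpleGraph.isTree_starGraph 1)
    rw [spineMap_eq_iff]
    intro p r hpr
    rw [SimpleGraph.starGraph_adj] at hpr
    rw [edge_act, edge_act]
    rcases hpr with ⟨hpr, rfl | rfl⟩
    · fin_cases r
      · rw [edge_swap, edge_swap _ _ x']
        simpa using congrArg (X.edge 1 0) huv
      · exact absurd rfl hpr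
      · simpa using hvw
    · fin_cases p
      · simpa using huv
      · exact absurd rfl hpr
      · rw [edge_swap, edge_swap _ _ x']
        simpa using congrArg (X.edge 1 0) hvw
  simpa [edge_act] using congrArg (X.edge 0 2) hface

theorem edge_eq_of_spineMap_eq (hX : X.SpinyAt 2) {n : ℕ} {T : SimpleGraph (Fin (n + 1))}
    (hT : T.Connected) {x x' : X.obj n} (h : X.spineMap T x = X.spineMap T x') {c d : Fin (n + 1)}
    (hcd : c ≠ d) : X.edge c d x = X.edge c d x' := by
  rw [spineMap_eq_iff] at h
  have along_walk {u v w : Fin (n + 1)} (p : T.Walk v w) (huv : X.edge u v x = X.edge u v x') :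
      X.edge u w x = X.edge u w x' := by
    induction p with
    | nil => exact huv
    | cons hadj _ ih => exact ih (edge_eq_of_edge_eq_of_edge_eq hX huv (h _ _ hadj))
  obtain ⟨p⟩ := hT.preconnected c d
  cases p with
  | nil => exact absurd rfl hcd
  | cons hadj p => exact along_walk p (h _ _ hadj)

theorem exists_eq_act_of_isSkeletal {q : ℕ} (hX : X.IsSkeletal q) {m : ℕ} (x : X.obj m) :
    ∃ (α : Fin (m + 1) → Fin (q + 1)) (z : X.obj q), x = X.act α z :=
  hX ⟨fun k => {y | ∃ (α : Fin (k + 1) → Fin (q + 1)) (z : X.obj q), y = X.act α z},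
    fun β _ ⟨α, z, hy⟩ => ⟨α ∘ β, z, by rw [hy, X.act_comp]⟩⟩
    (fun z => ⟨id, z, (X.act_id z).symm⟩) m x

theorem exists_isDegenerateAlong_of_isSkeletal {q : ℕ} (hX : X.IsSkeletal q) {m : ℕ}
    (hm : q < m) (x : X.obj m) : ∃ i j, i ≠ j ∧ IsDegenerateAlong x i j := by
  obtain ⟨α, z, rfl⟩ := exists_eq_act_of_isSkeletal hX x
  have hα : ¬ Function.Injective α := fun hα => by
    have := Fintype.card_le_of_injective α hα
    simp only [Fintype.card_fin] at this
    omega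
  obtain ⟨i, j, hαij, hij⟩ := Function.not_injective_iff.1 hα
  refine ⟨i, j, hij, isDegenerateAlong_act ?_⟩
  rw [hαij]
  exact isDegenerateAlong_self z (α j)

theorem spinyAt_two (hdeg : ∀ x : X.obj 2, ∃ i j, i ≠ j ∧ IsDegenerateAlong x i j) :
    X.SpinyAt 2 := by
  intro T hT x x' hxx
  rw [spineMap_eq_iff] at hxx
  obtain ⟨c, hc⟩ := hT.connected.exists_isUniversal_of_fin_three
  have hcenter {d e} (hde : d ≠ e) (hce : d = c ∨ e = c) : X.edge d e x = X.edge d e x' := by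
    rcases hce with rfl | rfl
    · exact hxx _ _ (hc hde)
    · exact hxx _ _ (hc hde.symm).symm
  obtain ⟨i, j, hij, hx⟩ := hdeg x
  obtain ⟨i', j', hij', hx'⟩ := hdeg x'
  obtain ⟨a, b, hab, hxab, hx'ab⟩ :
      ∃ a b, a ≠ b ∧ IsDegenerateAlong x a b ∧ IsDegenerateAlong x' a b := by
    by_cases hc₁ : i = c ∨ j = c
    · exact ⟨i, j, hij, hx, hx'.of_edge_eq (spinyAt_one X) hij' hx (hcenter hij hc₁)⟩
    by_cases hc₂ : i' = c ∨ j' = c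
    · exact ⟨i', j', hij', hx.of_edge_eq (spinyAt_one X) hij hx' (hcenter hij' hc₂).symm, hx'⟩
    -- both pairs avoid the centre, so they coincide
    rcases (by omega : (i' = i ∧ j' = j) ∨ (i' = j ∧ j' = i)) with ⟨rfl, rfl⟩ | ⟨rfl, rfl⟩
    · exact ⟨i', j', hij', hx, hx'⟩
    · exact ⟨i', j', hij', hx.symm, hx'⟩
  wlog hbc : b ≠ c generalizing a b
  · exact this b a hab.symm hxab.symm hx'ab.symm (by omega)
  exact eq_of_isDegenerateAlong (spinyAt_one X) hab hxab hx'ab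
    fun d e hde hdb heb => hcenter hde (by omega)

theorem spinyAt_succ {n : ℕ} (h₂ : X.SpinyAt 2) (hn : X.SpinyAt n)
    (hdeg : ∀ x : X.obj (n + 1), ∃ i j, i ≠ j ∧ IsDegenerateAlong x i j) :
    X.SpinyAt (n + 1) := by
  intro T hT x x' hxx
  have hedge {c d} (hcd : c ≠ d) := edge_eq_of_spineMap_eq h₂ hT.connected hxx hcd
  obtain ⟨i, j, hij, hx⟩ := hdeg x
  obtain ⟨i', j', hij', hx'⟩ := hdeg x'
  exact eq_of_isDegenerateAlong hn hij' (hx.of_edge_eq hn hij hx' (hedge hij').symm) hx'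
    fun c d hcd _ _ => hedge hcd

end SymSet

/-- a `q`-skeletal symmetric set is spiny iff `𝓔_T` is injective for
every spine `T` of `[n]` for each `1 ≤ n ≤ q`. -/
theorem stmt4 (X : SymSet) (q : ℕ) (hX : X.IsSkeletal q) :
    X.Spiny ↔ X.SpinyBelow q := by
  refine ⟨fun h n h1 _ => h n h1, fun h => ?_⟩
  have hdeg {m} (hm : q < m) := SymSet.exists_isDegenerateAlong_of_isSkeletal hX hm
  intro n
  induction n using Nat.strong_induction_on with
  | _ n ih =>
    intro hn
    by_cases hnq : n ≤ q
    · exact h n hn hnq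
    match n, hn with
    | 1, _ => exact X.spinyAt_one
    | 2, _ => exact SymSet.spinyAt_two (hdeg (by omega))
    | m + 3, _ =>
      exact SymSet.spinyAt_succ (ih 2 (by omega) (by omega)) (ih (m + 2) (by omega) (by omega))
        (hdeg (by omega))
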